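/- arXiv:2504.16478 — 2 statements merged into one kernel-verified Lean document; each statement's English description precedes it below -/
import Mathlib

section
/- Let J be the maximal block Jacobi operator on ℓ²(ℕ, ℂ^d) associated with Jacobi parameters (A_n), (B_n) (A_n invertible, B_n Hermitian). For z ∈ ℂ not an eigenvalue of J, the space GEV_{ℓ²}(z) of square-summable generalized eigenvectors (sequences u with A_{n−1}* u_{n−1} + B_n u_n + A_n u_{n+1} = z u_n for n ≥ 1 and u ∈ ℓ²) has dimension at most d. -/
open Matrix

/-- The formal block Jacobi operator: `(𝒥u)₀ = B₀u₀ + A₀u₁`,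
`(𝒥u)_n = A_{n−1}* u_{n−1} + B_n u_n + A_n u_{n+1}` for `n ≥ 1`. -/
noncomputable def jacobiAct {d : ℕ} (A B : ℕ → Matrix (Fin d) (Fin d) ℂ)
    (u : ℕ → Fin d → ℂ) : ℕ → Fin d → ℂ
  | 0 => (B 0).mulVec (u 0) + (A 0).mulVec (u 1)
  | n + 1 => (A n)ᴴ.mulVec (u n) + (B (n + 1)).mulVec (u (n + 1))
      + (A (n + 1)).mulVec (u (n + 2))

/-- Square-summability of a `ℂ^d`-valued sequence (with the Euclidean norm on `ℂ^d`). -/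
def IsL2 {d : ℕ} (u : ℕ → Fin d → ℂ) : Prop :=
  Memℓp (fun n => (WithLp.equiv 2 (Fin d → ℂ)).symm (u n)) 2

/-- The space `GEV_{ℓ²}(z)` of square-summable generalized eigenvectors. -/
noncomputable def GEVl2 (d : ℕ) (A B : ℕ → Matrix (Fin d) (Fin d) ℂ) (z : ℂ) :
    Submodule ℂ (ℕ → (Fin d → ℂ)) where
  carrier := {u | (∀ n : ℕ, 1 ≤ n → jacobiAct A B u n = z • u n) ∧ IsL2 u}
  add_mem' := by
    rintro u v ⟨hu1, hu2⟩ ⟨hv1, hv2⟩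
    refine ⟨fun n hn => ?_, ?_⟩
    swap
    · have h := hu2.add hv2
      unfold IsL2
      convert h using 1
      funext n
      rfl
    cases n with
    | zero => omega
    | succ m =>
      have hu := hu1 (m + 1) (by omega)
      have hv := hv1 (m + 1) (by omega)
      simp only [jacobiAct, Pi.add_apply, Matrix.mulVec_add, smul_add] at hu hv ⊢
      rw [← hu, ← hv]; abel
  zero_mem' := by
    refine ⟨fun n hn => ?_, ?_⟩
    swap
    · unfold IsL2
      convert (zero_memℓp : Memℓp (0 : ℕ → EuclideanSpace ℂ (Fin d)) 2) using 1
      funext n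
      rfl
    cases n with
    | zero => omega
    | succ m => simp [jacobiAct]
  smul_mem' := by
    rintro c u ⟨hu1, hu2⟩
    refine ⟨fun n hn => ?_, ?_⟩
    swap
    · have h := hu2.const_smul c
      unfold IsL2
      convert h using 1
      funext n
      rfl
    cases n with
    | zero => omega
    | succ m =>
      have hu := hu1 (m + 1) (by omega)
      simp only [jacobiAct, Pi.smul_apply, Matrix.mulVec_smul] at hu ⊢
      rw [smul_comm z c, ← hu]
      simp [smul_add]

/-!
A square-summable generalized eigenvector satisfies the eigenvalue equation `𝒥u = z u` at every
site except possibly `n = 0`, and its defect `(𝒥u)₀ - z u₀ ∈ ℂ^d` depends linearly on `u`. The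
defect vanishes only for eigenvectors of `J`, so when `z` is not an eigenvalue the defect map
embeds `GEV_{ℓ²}(z)` into `ℂ^d`.
-/

section

variable {d : ℕ} (A B : ℕ → Matrix (Fin d) (Fin d) ℂ) (z : ℂ)

noncomputable def boundaryDefect : (ℕ → Fin d → ℂ) →ₗ[ℂ] (Fin d → ℂ) where
  toFun u := jacobiAct A B u 0 - z • u 0
  map_add' u v := by
    simp only [jacobiAct, Pi.add_apply, mulVec_add, smul_add]
    abel
  map_smul' c u := by
    simp only [jacobiAct, Pi.smul_apply, mulVec_smul, RingHom.id_apply, smul_sub, smul_add]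
    rw [smul_comm z c]

theorem jacobiAct_eq_smul_of_mem_GEVl2 {u : ℕ → Fin d → ℂ} (hu : u ∈ GEVl2 d A B z)
    (h0 : boundaryDefect A B z u = 0) (n : ℕ) : jacobiAct A B u n = z • u n := by
  cases n with
  | zero => exact sub_eq_zero.mp h0
  | succ m => exact hu.1 (m + 1) m.succ_pos

theorem injective_boundaryDefect_domRestrict
    (hz : ∀ u : ℕ → Fin d → ℂ, IsL2 u → (∀ n, jacobiAct A B u n = z • u n) → u = 0) :
    Function.Injective ((boundaryDefect A B z).domRestrict (GEVl2 d A B z)) := by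
  rw [← LinearMap.ker_eq_bot, LinearMap.ker_eq_bot']
  rintro ⟨u, hu⟩ h0
  exact Subtype.ext (hz u hu.2 (jacobiAct_eq_smul_of_mem_GEVl2 A B z hu h0))

end

theorem rank_gevl2_le_general (d : ℕ) (A B : ℕ → Matrix (Fin d) (Fin d) ℂ)
    (z : ℂ)
    (hz : ∀ u : ℕ → Fin d → ℂ, IsL2 u →
      (∀ n, jacobiAct A B u n = z • u n) → u = 0) :
    Module.rank ℂ (GEVl2 d A B z) ≤ d :=
  calc Module.rank ℂ (GEVl2 d A B z) ≤ Module.rank ℂ (Fin d → ℂ) :=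
        LinearMap.rank_le_of_injective _ (injective_boundaryDefect_domRestrict A B z hz)
    _ = d := by simp

/-- If `z` is not an eigenvalue of the maximal block Jacobi operator `J`
(whose domain is `{u ∈ ℓ² : 𝒥u ∈ ℓ²}`), then the space of square-summable
generalized eigenvectors for `z` has dimension at most `d`. -/
theorem rank_gevl2_le (d : ℕ) (A B : ℕ → Matrix (Fin d) (Fin d) ℂ)
    (hA : ∀ n, IsUnit (A n).det) (hB : ∀ n, (B n).IsHermitian) (z : ℂ)
    (hz : ∀ u : ℕ → Fin d → ℂ, IsL2 u →
      (∀ n, jacobiAct A B u n = z • u n) → u = 0) :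
    Module.rank ℂ (GEVl2 d A B z) ≤ d :=
  rank_gevl2_le_general d A B z hz
end

section
/- Let J be a self-adjoint maximal block Jacobi operator, z ∈ ℂ \ ℝ, and v ∈ Ker W(z) where W(z) := ((J − zI)⁻¹ δ₀(e_j), δ₀(e_i))_{i,j} ∈ M_d(ℂ) is the matrix Weyl coefficient. Then v = 0; i.e., W(z) is invertible. -/
open Matrix

/-- The sequence `δ₀(v)` with `v` at index `0` and `0` elsewhere. -/
def delta0 {d : ℕ} (v : Fin d → ℂ) : ℕ → Fin d → ℂ :=
  fun n => if n = 0 then v else 0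

/-- The `ℓ²` inner product `⟨u, v⟩ = ∑_n ∑_i u_n(i) conj(v_n(i))`
(linear in the first, antilinear in the second argument). -/
noncomputable def ipSeq {d : ℕ} (u v : ℕ → Fin d → ℂ) : ℂ :=
  ∑' n : ℕ, u n ⬝ᵥ star (v n)

/-! The vector `U = ∑ⱼ vⱼ (J − z)⁻¹ δ₀(eⱼ)` solves `(J − z) U = δ₀(v)`, and its `0`-th entry is
`W(z) v`. If `W(z) v = 0`, then `U ⟂ δ₀(v)`, so `⟨JU, U⟩ = z ‖U‖²` and `⟨U, JU⟩ = z̄ ‖U‖²`;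
symmetry of `J` and `Im z ≠ 0` force `U = 0`, hence `δ₀(v) = (J − z) U = 0`. -/

section
variable {d : ℕ}

def l2Submodule : Submodule ℂ (ℕ → Fin d → ℂ) where
  carrier := {u | IsL2 u}
  add_mem' {u v} hu hv := by
    show Memℓp (fun n => (WithLp.equiv 2 (Fin d → ℂ)).symm ((u + v) n)) 2
    convert hu.add hv using 1
    funext n
    simp
  zero_mem' := zero_memℓp
  smul_mem' c _ hu := hu.const_smul c

lemma isL2_delta0 (w : Fin d → ℂ) : IsL2 (delta0 w) :=
  memℓp_gen <| summable_of_ne_finset_zero (s := {0}) fun n hn => by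
    simp [delta0, Finset.mem_singleton.not.mp hn]

def IsL2.toL2 {u : ℕ → Fin d → ℂ} (hu : IsL2 u) : lp (fun _ : ℕ => EuclideanSpace ℂ (Fin d)) 2 :=
  ⟨_, hu⟩

lemma ipSeq_eq_inner {u v : ℕ → Fin d → ℂ} (hu : IsL2 u) (hv : IsL2 v) :
    ipSeq u v = inner ℂ hv.toL2 hu.toL2 := by
  rw [lp.inner_eq_tsum]
  rfl

lemma eq_zero_of_ipSeq_self_eq_zero {u : ℕ → Fin d → ℂ} (hu : IsL2 u) (h : ipSeq u u = 0) :
    u = 0 := by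
  rw [ipSeq_eq_inner hu hu, inner_self_eq_zero] at h
  funext n
  simpa [IsL2.toL2] using congrArg (fun x : lp _ 2 => WithLp.ofLp (x n)) h

lemma ipSeq_delta0_right (u : ℕ → Fin d → ℂ) (w : Fin d → ℂ) :
    ipSeq u (delta0 w) = u 0 ⬝ᵥ star w := by
  rw [ipSeq, tsum_eq_single 0 fun n hn => by simp [delta0, hn]]
  simp [delta0]

lemma ipSeq_smul_add_delta0_left {u : ℕ → Fin d → ℂ} (hu : u 0 = 0) (c : ℂ) (w : Fin d → ℂ) :
    ipSeq (c • u + delta0 w) u = c * ipSeq u u := by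
  rw [ipSeq, ipSeq, ← tsum_mul_left]
  congr 1; funext n
  by_cases hn : n = 0 <;> simp [hn, hu, delta0]

lemma ipSeq_smul_add_delta0_right {u : ℕ → Fin d → ℂ} (hu : u 0 = 0) (c : ℂ) (w : Fin d → ℂ) :
    ipSeq u (c • u + delta0 w) = starRingEnd ℂ c * ipSeq u u := by
  rw [ipSeq, ipSeq, ← tsum_mul_left]
  congr 1; funext n
  by_cases hn : n = 0 <;> simp [hn, hu, delta0, star_smul]

lemma eq_zero_of_ipSeq_smul_add_delta0_comm {z : ℂ} (hz : z.im ≠ 0) {u : ℕ → Fin d → ℂ}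
    (hu : IsL2 u) (hu0 : u 0 = 0) (w : Fin d → ℂ)
    (hcomm : ipSeq (z • u + delta0 w) u = ipSeq u (z • u + delta0 w)) : u = 0 := by
  rw [ipSeq_smul_add_delta0_left hu0, ipSeq_smul_add_delta0_right hu0] at hcomm
  have hz' : z ≠ starRingEnd ℂ z := fun h => hz (Complex.conj_eq_iff_im.mp h.symm)
  exact eq_zero_of_ipSeq_self_eq_zero hu ((mul_eq_mul_right_iff.mp hcomm).resolve_left hz')

lemma sum_smul_delta0_single (v : Fin d → ℂ) :
    ∑ j, v j • delta0 (Pi.single j (1 : ℂ)) = delta0 v := by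
  funext n k
  by_cases hn : n = 0 <;> simp [delta0, hn, Finset.sum_apply, Pi.single_apply]

lemma weyl_mulVec (e : Fin d → ℕ → Fin d → ℂ) (v : Fin d → ℂ) :
    (Matrix.of fun i j => ipSeq (e j) (delta0 (Pi.single i 1))) *ᵥ v = (∑ j, v j • e j) 0 := by
  funext i
  simp [mulVec, dotProduct, ipSeq_delta0_right, Finset.sum_apply, Pi.single_apply, mul_comm]

noncomputable def jacobiLinearMap (A B : ℕ → Matrix (Fin d) (Fin d) ℂ) :
    (ℕ → Fin d → ℂ) →ₗ[ℂ] (ℕ → Fin d → ℂ) where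
  toFun := jacobiAct A B
  map_add' u v := by
    funext n
    rcases n with _ | n <;> simp only [jacobiAct, Pi.add_apply, mulVec_add] <;> abel
  map_smul' c u := by
    funext n
    rcases n with _ | n <;> simp [jacobiAct, mulVec_smul, smul_add]

lemma jacobiAct_sum_smul {A B : ℕ → Matrix (Fin d) (Fin d) ℂ} {z : ℂ}
    {e : Fin d → ℕ → Fin d → ℂ}
    (he : ∀ j, jacobiAct A B (e j) = z • e j + delta0 (Pi.single j 1)) (v : Fin d → ℂ) :
    jacobiAct A B (∑ j, v j • e j) = z • ∑ j, v j • e j + delta0 v := by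
  change jacobiLinearMap A B _ = _
  simp only [map_sum, map_smul]
  change ∑ j, v j • jacobiAct A B (e j) = _
  simp only [he, smul_add, Finset.sum_add_distrib, smul_comm (v _) z, ← Finset.smul_sum,
    sum_smul_delta0_single]

end

theorem weyl_coefficient_ker_eq_bot_general (d : ℕ) (A B : ℕ → Matrix (Fin d) (Fin d) ℂ)
    (hsa : ∀ u v : ℕ → Fin d → ℂ, IsL2 u → IsL2 (jacobiAct A B u) →
      IsL2 v → IsL2 (jacobiAct A B v) →
      ipSeq (jacobiAct A B u) v = ipSeq u (jacobiAct A B v))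
    (z : ℂ) (hz : z.im ≠ 0)
    (R : (ℕ → Fin d → ℂ) → (ℕ → Fin d → ℂ))
    (hR : ∀ f, IsL2 f → IsL2 (R f) ∧ jacobiAct A B (R f) = z • R f + f)
    (v : Fin d → ℂ)
    (hv : (Matrix.of fun i j : Fin d =>
        ipSeq (R (delta0 (Pi.single j 1))) (delta0 (Pi.single i 1))).mulVec v = 0) :
    v = 0 := by
  set e : Fin d → ℕ → Fin d → ℂ := fun j => R (delta0 (Pi.single j 1))
  have he : ∀ j, IsL2 (e j) ∧ jacobiAct A B (e j) = z • e j + delta0 (Pi.single j 1) :=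
    fun j => hR _ (isL2_delta0 _)
  set U := ∑ j, v j • e j
  have hU : IsL2 U := l2Submodule.sum_mem fun j _ => l2Submodule.smul_mem (v j) (he j).1
  have hJU : jacobiAct A B U = z • U + delta0 v := jacobiAct_sum_smul (fun j => (he j).2) v
  have hJU_L2 : IsL2 (jacobiAct A B U) := by
    rw [hJU]
    exact l2Submodule.add_mem (l2Submodule.smul_mem z hU) (isL2_delta0 v)
  have hU0 : U 0 = 0 := by rw [← hv, weyl_mulVec]
  have hsym := hsa U U hU hJU_L2 hU hJU_L2
  rw [hJU] at hsym
  have hU_eq : U = 0 := eq_zero_of_ipSeq_smul_add_delta0_comm hz hU hU0 v hsym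
  rw [hU_eq, show jacobiAct A B 0 = 0 from (jacobiLinearMap A B).map_zero] at hJU
  simpa [delta0] using (congrFun hJU 0).symm

/-- Let `J` be the maximal block Jacobi operator, assumed self-adjoint (equivalently:
symmetric on its maximal domain), and `z ∈ ℂ \ ℝ`. If `v` lies in the kernel of the
matrix Weyl coefficient `W(z) = (⟨(J − zI)⁻¹δ₀(e_j), δ₀(e_i)⟩)_{i,j}`, then `v = 0`;
i.e. `W(z)` is invertible. -/
theorem weyl_coefficient_ker_eq_bot (d : ℕ) (A B : ℕ → Matrix (Fin d) (Fin d) ℂ)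
    (hA : ∀ n, IsUnit (A n).det) (hB : ∀ n, (B n).IsHermitian)
    (hsa : ∀ u v : ℕ → Fin d → ℂ, IsL2 u → IsL2 (jacobiAct A B u) →
      IsL2 v → IsL2 (jacobiAct A B v) →
      ipSeq (jacobiAct A B u) v = ipSeq u (jacobiAct A B v))
    (z : ℂ) (hz : z.im ≠ 0)
    (R : (ℕ → Fin d → ℂ) → (ℕ → Fin d → ℂ))
    (hR : ∀ f, IsL2 f → IsL2 (R f) ∧ jacobiAct A B (R f) = z • R f + f)
    (v : Fin d → ℂ)
    (hv : (Matrix.of fun i j : Fin d =>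
        ipSeq (R (delta0 (Pi.single j 1))) (delta0 (Pi.single i 1))).mulVec v = 0) :
    v = 0 :=
  weyl_coefficient_ker_eq_bot_general d A B hsa z hz R hR v hv
end
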